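/- Length bound for the interval I^{NAS0}. Let z be a real number with z² < 7. For every A > 0 and every index i with 1 ≤ i ≤ m, g_{1i}(A) + g_{2i}(A) + ((7−z²)/4)·g_{3i}(A) < D_i · (1 + (7−z²)/2); equivalently, the half-length z·√(g_{1i}(A)+g_{2i}(A)+((7−z²)/4)g_{3i}(A)) of I^{NAS0} is less than z·√(D_i(1+(7−z²)/2)). -/

import Mathlib

/-! With `B = D_i/(A+D_i)`, the weighted-least-squares leverage bound `x_iᵀ(XᵀV⁻¹X)⁻¹x_i ≤ A+D_i`
gives `g₂ ≤ B²(A+D_i)`, so `g₁ + g₂ ≤ D_i`; and since `tr(V⁻²) ≥ (A+D_i)⁻²`,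
`g₃ ≤ 2B²(A+D_i) = 2D_i·B < 2D_i` for `A > 0`. -/

open Matrix Real

/-- The diagonal covariance matrix `V(A) = diag(A + D₁, …, A + D_m)`. -/
noncomputable def Vmat {m : ℕ} (D : Fin m → ℝ) (A : ℝ) : Matrix (Fin m) (Fin m) ℝ :=
  Matrix.diagonal (fun i => A + D i)

/-- `g_{1i}(A) = A·D_i/(A+D_i)`. -/
noncomputable def g1 {m : ℕ} (D : Fin m → ℝ) (A : ℝ) (i : Fin m) : ℝ :=
  A * D i / (A + D i)

/-- `g_{2i}(A) = B_i²·x_iᵀ(XᵀV⁻¹X)⁻¹x_i` with `B_i = D_i/(A+D_i)`. -/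
noncomputable def g2 {m p : ℕ} (X : Matrix (Fin m) (Fin p) ℝ) (D : Fin m → ℝ)
    (A : ℝ) (i : Fin m) : ℝ :=
  (D i / (A + D i)) ^ 2 * (X i ⬝ᵥ ((Xᵀ * (Vmat D A)⁻¹ * X)⁻¹ *ᵥ X i))

/-- `g_{3i}(A) = 2B_i²/((A+D_i)·tr(V⁻²))` with `B_i = D_i/(A+D_i)`. -/
noncomputable def g3 {m : ℕ} (D : Fin m → ℝ) (A : ℝ) (i : Fin m) : ℝ :=
  2 * (D i / (A + D i)) ^ 2 / ((A + D i) * (((Vmat D A)⁻¹) ^ 2).trace)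

namespace Matrix

variable {ι κ : Type*} [Fintype κ]

theorem mulVec_injective_of_rank_eq {K : Type*} [Field K] {X : Matrix ι κ K}
    (hX : X.rank = Fintype.card κ) : Function.Injective X.mulVec := by
  have h := LinearMap.finrank_range_add_finrank_ker X.mulVecLin
  rw [show Module.finrank K (LinearMap.range X.mulVecLin) = Fintype.card κ from hX,
    Module.finrank_fintype_fun_eq_card, add_eq_left, Submodule.finrank_eq_zero,
    LinearMap.ker_eq_bot] at h
  exact h

variable [Fintype ι] [DecidableEq ι]

theorem dotProduct_transpose_mul_diagonal_mul_mulVec (X : Matrix ι κ ℝ) (w : ι → ℝ)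
    (v : κ → ℝ) :
    v ⬝ᵥ ((Xᵀ * diagonal w * X) *ᵥ v) = ∑ j, w j * (X *ᵥ v) j ^ 2 := by
  rw [← mulVec_mulVec, ← mulVec_mulVec, dotProduct_mulVec, vecMul_transpose]
  simp only [mulVec_diagonal, dotProduct, sq]
  exact Finset.sum_congr rfl fun j _ => by ring

theorem dotProduct_inv_transpose_mul_diagonal_mul_le [DecidableEq κ] {X : Matrix ι κ ℝ}
    (hX : Function.Injective X.mulVec) {w : ι → ℝ} (hw : ∀ j, 0 < w j) (i : ι) :
    X i ⬝ᵥ ((Xᵀ * diagonal w * X)⁻¹ *ᵥ X i) ≤ (w i)⁻¹ := by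
  set M := Xᵀ * diagonal w * X
  have hM : M.PosDef := by
    simpa [M] using (posDef_diagonal_iff.2 hw).conjTranspose_mul_mul_same hX
  set v := M⁻¹ *ᵥ X i
  set t := X i ⬝ᵥ v
  have hMv : M *ᵥ v = X i := by
    rw [mulVec_mulVec, mul_nonsing_inv _ ((isUnit_iff_isUnit_det M).mp hM.isUnit), one_mulVec]
  -- `t = vᵀ M v = ∑ w_j (Xv)_j²` and `(Xv)_i = t`, so `w_i t² ≤ t`.
  have hquad : w i * t ^ 2 ≤ t := calc
    w i * t ^ 2 = w i * (X *ᵥ v) i ^ 2 := rfl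
    _ ≤ ∑ j, w j * (X *ᵥ v) j ^ 2 :=
      Finset.single_le_sum (fun j _ => mul_nonneg (hw j).le (sq_nonneg _)) (Finset.mem_univ i)
    _ = t := by rw [← dotProduct_transpose_mul_diagonal_mul_mulVec, hMv, dotProduct_comm]
  rw [← one_div, le_div_iff₀ (hw i)]
  nlinarith [hw i]

end Matrix

theorem Vmat_inv {m : ℕ} (D : Fin m → ℝ) {A : ℝ} (hAD : ∀ j, A + D j ≠ 0) :
    (Vmat D A)⁻¹ = diagonal fun j => (A + D j)⁻¹ := by
  refine inv_eq_right_inv ?_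
  rw [Vmat, diagonal_mul_diagonal, ← diagonal_one]
  exact congrArg diagonal (funext fun j => mul_inv_cancel₀ (hAD j))

section

variable {m p : ℕ} (D : Fin m → ℝ) {A : ℝ}

theorem g1_add_g2_le {X : Matrix (Fin m) (Fin p) ℝ} (hX : X.rank = p)
    (hAD : ∀ j, 0 < A + D j) (i : Fin m) : g1 D A i + g2 X D A i ≤ D i := by
  have hlev : X i ⬝ᵥ ((Xᵀ * (Vmat D A)⁻¹ * X)⁻¹ *ᵥ X i) ≤ A + D i := by
    have := dotProduct_inv_transpose_mul_diagonal_mul_le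
      (mulVec_injective_of_rank_eq (hX.trans (Fintype.card_fin p).symm))
      (fun j => inv_pos.2 (hAD j)) i
    rwa [inv_inv, ← Vmat_inv D fun j => (hAD j).ne'] at this
  have hi := hAD i
  calc g1 D A i + g2 X D A i ≤ A * D i / (A + D i) + (D i / (A + D i)) ^ 2 * (A + D i) := by
        unfold g1 g2; gcongr
    _ = D i := by field_simp

theorem sq_inv_le_trace_Vmat_inv_sq (hAD : ∀ j, A + D j ≠ 0) (i : Fin m) :
    (A + D i)⁻¹ ^ 2 ≤ ((Vmat D A)⁻¹ ^ 2).trace := by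
  rw [Vmat_inv D hAD, diagonal_pow, trace_diagonal]
  exact Finset.single_le_sum (f := fun j => (A + D j)⁻¹ ^ 2) (fun j _ => sq_nonneg _)
    (Finset.mem_univ i)

theorem g3_le (hAD : ∀ j, 0 < A + D j) (i : Fin m) : g3 D A i ≤ 2 * D i ^ 2 / (A + D i) := by
  have hi := hAD i
  have htr : (A + D i)⁻¹ ≤ (A + D i) * ((Vmat D A)⁻¹ ^ 2).trace := calc
    (A + D i)⁻¹ = (A + D i) * (A + D i)⁻¹ ^ 2 := by field_simp
    _ ≤ _ := by gcongr; exact sq_inv_le_trace_Vmat_inv_sq D (fun j => (hAD j).ne') i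
  calc g3 D A i ≤ 2 * (D i / (A + D i)) ^ 2 / (A + D i)⁻¹ := by
        unfold g3; gcongr
    _ = 2 * D i ^ 2 / (A + D i) := by field_simp

end

theorem nas0_length_bound_general {m p : ℕ}
    (X : Matrix (Fin m) (Fin p) ℝ) (hrank : X.rank = p)
    (D : Fin m → ℝ) (hD : ∀ j, 0 < D j)
    (z : ℝ) (hz : z ^ 2 < 7)
    (A : ℝ) (hA : 0 < A) (i : Fin m) :
    g1 D A i + g2 X D A i + ((7 - z ^ 2) / 4) * g3 D A i
      < D i * (1 + (7 - z ^ 2) / 2) ∧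
    (0 < z →
      z * Real.sqrt (g1 D A i + g2 X D A i + ((7 - z ^ 2) / 4) * g3 D A i)
        < z * Real.sqrt (D i * (1 + (7 - z ^ 2) / 2))) := by
  have hAD : ∀ j, 0 < A + D j := fun j => add_pos hA (hD j)
  have hc : 0 < (7 - z ^ 2) / 4 := by linarith
  have hDi := hD i
  have hbound : g1 D A i + g2 X D A i + ((7 - z ^ 2) / 4) * g3 D A i
      < D i * (1 + (7 - z ^ 2) / 2) := calc
    _ ≤ D i + (7 - z ^ 2) / 4 * (2 * D i ^ 2 / (A + D i)) := by
      gcongr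
      exacts [g1_add_g2_le D hrank hAD i, g3_le D hAD i]
    _ < D i + (7 - z ^ 2) / 4 * (2 * D i) := by
      gcongr
      rw [div_lt_iff₀ (hAD i)]
      nlinarith
    _ = D i * (1 + (7 - z ^ 2) / 2) := by ring
  refine ⟨hbound, fun hz0 => mul_lt_mul_of_pos_left ?_ hz0⟩
  exact (sqrt_lt_sqrt_iff_of_pos (mul_pos hDi (by linarith))).2 hbound

/-- Length bound for `I^{NAS0}`: if `z² < 7`, then for every `A > 0` and every `i`,
`g_{1i}(A) + g_{2i}(A) + ((7−z²)/4)·g_{3i}(A) < D_i·(1 + (7−z²)/2)`; equivalently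
(for `z > 0`) the half-length of `I^{NAS0}` is less than `z·√(D_i(1+(7−z²)/2))`. -/
theorem nas0_length_bound {m p : ℕ} (hm : 0 < m) (hp : 0 < p)
    (X : Matrix (Fin m) (Fin p) ℝ) (hrank : X.rank = p)
    (D : Fin m → ℝ) (hD : ∀ j, 0 < D j)
    (z : ℝ) (hz : z ^ 2 < 7)
    (A : ℝ) (hA : 0 < A) (i : Fin m) :
    g1 D A i + g2 X D A i + ((7 - z ^ 2) / 4) * g3 D A i
      < D i * (1 + (7 - z ^ 2) / 2) ∧
    (0 < z →
      z * Real.sqrt (g1 D A i + g2 X D A i + ((7 - z ^ 2) / 4) * g3 D A i)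
        < z * Real.sqrt (D i * (1 + (7 - z ^ 2) / 2))) :=
  nas0_length_bound_general X hrank D hD z hz A hA i
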